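/- If ξ is a real-valued random variable with mean zero and unit variance, then there exists ρ ∈ (0,1) such that for every u ∈ ℝ, P(|ξ - u| ≥ ρ) ≥ ρ. -/

import Mathlib

open MeasureTheory Filter

set_option maxHeartbeats 1000000 in
/-- If ξ has mean zero and unit variance, then there is ρ ∈ (0,1) such that for all u ∈ ℝ,
P(|ξ - u| ≥ ρ) ≥ ρ. -/
theorem exists_rho_levy_anticoncentration
    {Ω : Type*} [MeasurableSpace Ω] (μ : Measure Ω) [IsProbabilityMeasure μ]
    (ξ : Ω → ℝ) (hmeas : Measurable ξ) (hint : Integrable ξ μ)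
    (hint2 : Integrable (fun ω => (ξ ω) ^ 2) μ)
    (hmean : ∫ ω, ξ ω ∂μ = 0) (hvar : ∫ ω, (ξ ω) ^ 2 ∂μ = 1) :
    ∃ ρ : ℝ, ρ ∈ Set.Ioo (0 : ℝ) 1 ∧
      ∀ u : ℝ, ENNReal.ofReal ρ ≤ μ {ω | ρ ≤ |ξ ω - u|} := by
  -- Step 1: choose S ≥ 1 with tail second moment ≤ 1/8
  obtain ⟨S, hS1, hStail⟩ : ∃ S : ℝ, 1 ≤ S ∧ ∫ ω in {ω | S < |ξ ω|}, (ξ ω)^2 ∂μ ≤ 1/8 := by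
    have hC : ∀ n : ℕ, MeasurableSet {ω | (n:ℝ) < |ξ ω|} :=
      fun n => measurableSet_lt measurable_const hmeas.abs
    have htend : Tendsto (fun n : ℕ => ∫ ω, ({ω | (n:ℝ) < |ξ ω|}.indicator (fun ω => (ξ ω)^2)) ω ∂μ)
        atTop (nhds (∫ ω, (0:ℝ) ∂μ)) := by
      apply tendsto_integral_of_dominated_convergence (fun ω => (ξ ω)^2)
      · intro n
        exact ((hmeas.pow_const 2).indicator (hC n)).aestronglyMeasurable
      · exact hint2
      · intro n
        filter_upwards with ω
        rw [Set.indicator_apply]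
        split_ifs
        · simp [abs_of_nonneg (sq_nonneg (ξ ω))]
        · simp [sq_nonneg]
      · filter_upwards with ω
        apply tendsto_nhds_of_eventually_eq
        filter_upwards [eventually_ge_atTop ⌈|ξ ω|⌉₊] with n hn
        apply Set.indicator_of_notMem
        simp only [Set.mem_setOf_eq, not_lt]
        exact le_trans (Nat.le_ceil _) (by exact_mod_cast hn)
    simp only [integral_zero] at htend
    obtain ⟨n, hn1, hn2⟩ :=
      ((eventually_ge_atTop 1).and (htend.eventually_le_const (by norm_num : (0:ℝ) < 1/8))).exists
    refine ⟨(n:ℝ), by exact_mod_cast hn1, ?_⟩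
    rwa [integral_indicator (hC n)] at hn2
  set ρ : ℝ := 1/(8*S^2) with hρdef
  have hS0 : (0:ℝ) < S := lt_of_lt_of_le one_pos hS1
  have hρ0 : 0 < ρ := by positivity
  have hρ18 : ρ ≤ 1/8 := by
    rw [hρdef]
    rw [div_le_div_iff₀ (by positivity) (by norm_num)]
    nlinarith
  refine ⟨ρ, ⟨hρ0, by linarith⟩, fun u => ?_⟩
  set A : Set Ω := {ω | ρ ≤ |ξ ω - u|} with hAdef
  have hA : MeasurableSet A := measurableSet_le measurable_const (hmeas.sub measurable_const).abs
  have hμA : μ A ≠ ⊤ := measure_ne_top μ A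
  set P : ℝ := (μ A).toReal with hPdef
  have hP0 : 0 ≤ P := ENNReal.toReal_nonneg
  suffices h : ρ ≤ P by
    rw [hPdef] at h
    exact (ENNReal.ofReal_le_iff_le_toReal hμA).mpr h
  by_cases hhalf : 1/2 ≤ P
  · linarith
  push_neg at hhalf
  -- integrability of (ξ - u)^2
  have heq : (fun ω => (ξ ω - u)^2) = fun ω => (ξ ω)^2 + (-(2*u))*(ξ ω) + u^2 := by
    funext ω; ring
  have hintf : Integrable (fun ω => (ξ ω - u)^2) μ := by
    rw [heq]
    exact (hint2.add (hint.const_mul _)).add (integrable_const _)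
  have hg : Integrable (fun ω => ξ ω ^ 2 + -(2*u) * ξ ω) μ := by
    exact hint2.add (hint.const_mul _)
  have hmoment : ∫ ω, (ξ ω - u)^2 ∂μ = 1 + u^2 := by
    rw [heq]
    rw [integral_add hg (integrable_const _),
      integral_add hint2 (by exact hint.const_mul _ : Integrable (fun ω => -(2*u) * ξ ω) μ),
      integral_const_mul, hmean, hvar, integral_const]
    simp
  -- split integral over A and Aᶜ
  have hsplit : ∫ ω in A, (ξ ω - u)^2 ∂μ + ∫ ω in Aᶜ, (ξ ω - u)^2 ∂μ = 1 + u^2 := by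
    rw [integral_add_compl hA hintf, hmoment]
  -- bound on Aᶜ
  have hAc : ∫ ω in Aᶜ, (ξ ω - u)^2 ∂μ ≤ ρ^2 := by
    have h1 : ∫ ω in Aᶜ, (ξ ω - u)^2 ∂μ ≤ ∫ _ω in Aᶜ, ρ^2 ∂μ := by
      apply setIntegral_mono_on hintf.integrableOn (integrableOn_const (measure_ne_top μ _)) hA.compl
      intro ω hω
      simp only [hAdef, Set.mem_compl_iff, Set.mem_setOf_eq, not_le] at hω
      nlinarith [abs_nonneg (ξ ω - u), sq_abs (ξ ω - u), hω]
    refine h1.trans ?_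
    rw [setIntegral_const, smul_eq_mul, measureReal_def]
    have h2 : (μ Aᶜ).toReal ≤ 1 := by
      simpa using ENNReal.toReal_mono ENNReal.one_ne_top (prob_le_one (μ := μ) (s := Aᶜ))
    nlinarith [ENNReal.toReal_nonneg (a := μ Aᶜ), sq_nonneg ρ,
      mul_le_mul_of_nonneg_right h2 (sq_nonneg ρ)]
  -- bound over A: (ξ-u)^2 ≤ 2 ξ^2 + 2 u^2
  have hA1 : ∫ ω in A, (ξ ω - u)^2 ∂μ ≤ 2 * ∫ ω in A, (ξ ω)^2 ∂μ + 2*u^2*P := by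
    have hgi : IntegrableOn (fun ω => 2*(ξ ω)^2 + 2*u^2) A μ := by
      exact ((hint2.const_mul 2).add (integrable_const _)).integrableOn
    have h1 : ∫ ω in A, (ξ ω - u)^2 ∂μ ≤ ∫ ω in A, (2*(ξ ω)^2 + 2*u^2) ∂μ := by
      apply setIntegral_mono_on hintf.integrableOn hgi hA
      intro ω _
      nlinarith [sq_nonneg (ξ ω + u)]
    refine h1.trans_eq ?_
    rw [integral_add (by exact (hint2.const_mul 2).integrableOn :
        IntegrableOn (fun ω => 2*(ξ ω)^2) A μ)
        (integrableOn_const (measure_ne_top μ _)),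
      integral_const_mul, setIntegral_const, smul_eq_mul, measureReal_def, hPdef]
    ring
  -- bound ∫_A ξ^2 ≤ S^2 * P + 1/8
  have hA2 : ∫ ω in A, (ξ ω)^2 ∂μ ≤ S^2 * P + 1/8 := by
    set C : Set Ω := {ω | S < |ξ ω|} with hCdef
    have hCm : MeasurableSet C := measurableSet_lt measurable_const hmeas.abs
    have hsplit2 : ∫ ω in A ∩ C, (ξ ω)^2 ∂μ + ∫ ω in A \ C, (ξ ω)^2 ∂μ = ∫ ω in A, (ξ ω)^2 ∂μ :=
      integral_inter_add_diff hCm hint2.integrableOn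
    have hb1 : ∫ ω in A ∩ C, (ξ ω)^2 ∂μ ≤ 1/8 := by
      refine le_trans ?_ hStail
      apply setIntegral_mono_set hint2.integrableOn
      · filter_upwards with ω using sq_nonneg _
      · exact HasSubset.Subset.eventuallyLE Set.inter_subset_right
    have hb2 : ∫ ω in A \ C, (ξ ω)^2 ∂μ ≤ S^2 * P := by
      have h1 : ∫ ω in A \ C, (ξ ω)^2 ∂μ ≤ ∫ _ω in A \ C, S^2 ∂μ := by
        apply setIntegral_mono_on hint2.integrableOn
          (integrableOn_const (measure_ne_top μ _)) (hA.diff hCm)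
        intro ω hω
        have : ¬ S < |ξ ω| := hω.2
        push_neg at this
        nlinarith [abs_nonneg (ξ ω), sq_abs (ξ ω)]
      refine h1.trans ?_
      rw [setIntegral_const, smul_eq_mul, measureReal_def]
      have hle : (μ (A \ C)).toReal ≤ P := by
        rw [hPdef]
        exact ENNReal.toReal_mono hμA (measure_mono Set.diff_subset)
      nlinarith [sq_nonneg S, mul_le_mul_of_nonneg_right hle (sq_nonneg S)]
    linarith
  -- combine
  have e3 : 2*u^2*P ≤ u^2 := by nlinarith [sq_nonneg u]
  have e4 : ρ^2 ≤ 1/64 := by nlinarith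
  have key : 1/2 ≤ 2*S^2*P := by linarith
  have h2 : 2*S^2*ρ = 1/4 := by
    rw [hρdef]; field_simp; ring
  by_contra hc
  push_neg at hc
  have h3 : 2*S^2*P < 2*S^2*ρ :=
    mul_lt_mul_of_pos_left hc (by positivity)
  linarith
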